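/- arXiv:0806.0092 — 5 statements merged into one kernel-verified Lean document; each statement's English description precedes it below -/
import Mathlib

section
/- Let H be a finite abelian group and let C, S ⊆ H with C nonempty and def_H(S) ≤ |C|/2. Then (1/|C|)·∑_{c∈C} λ_S(c) ≥ def_H(S)/2; in particular, there exists c ∈ C with λ_S(c) ≥ def_H(S)/2. -/
open Finset

/-- `λ_S(c) = |(S + c) \ S|`. -/
def lam {H : Type*} [AddCommGroup H] [DecidableEq H] (S : Finset H) (c : H) : ℕ :=
  ((S.image (· + c)) \ S).card

/-- `def_H(S) = min {|S|, |H \ S|}`. -/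
def deficiency {H : Type*} [AddCommGroup H] [Fintype H] [DecidableEq H] (S : Finset H) : ℕ :=
  min S.card Sᶜ.card

section aux
variable {H : Type*} [AddCommGroup H] [DecidableEq H]

lemma aux_image_compl [Fintype H] (S : Finset H) (c : H) :
    Sᶜ.image (· + c) = (S.image (· + c))ᶜ := by
  ext x
  simp only [mem_image, mem_compl]
  constructor
  · rintro ⟨y, hy, rfl⟩ ⟨z, hz, hzy⟩
    exact hy (by rwa [add_left_injective c hzy] at hz)
  · intro hx
    exact ⟨x - c, fun hxc => hx ⟨x - c, hxc, sub_add_cancel x c⟩, sub_add_cancel x c⟩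

lemma aux_lam_compl [Fintype H] (S : Finset H) (c : H) : lam Sᶜ c = lam S c := by
  unfold lam
  set A := S.image (· + c) with hA
  have h1 : A.card = S.card := card_image_of_injective _ (add_left_injective c)
  have h2 : (A \ S).card + (A ∩ S).card = A.card := card_sdiff_add_card_inter A S
  have hB : Sᶜ.image (· + c) = Aᶜ := aux_image_compl S c
  rw [hB]
  have h3 : (Aᶜ \ Sᶜ).card + (Aᶜ ∩ Sᶜ).card = Aᶜ.card := card_sdiff_add_card_inter _ _
  have h4 : (Aᶜ ∩ Sᶜ).card = (A ∪ S)ᶜ.card := by rw [compl_union]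
  have h5 : (A ∪ S)ᶜ.card = Fintype.card H - (A ∪ S).card := card_compl _
  have h6 : Aᶜ.card = Fintype.card H - A.card := card_compl _
  have h7 : (A ∪ S).card + (A ∩ S).card = A.card + S.card := card_union_add_card_inter A S
  have h8 : (A ∪ S).card ≤ Fintype.card H := card_le_univ _
  have h9 : A.card ≤ Fintype.card H := card_le_univ _
  omega

lemma aux_inter_card (S : Finset H) (c : H) :
    ((S.image (· + c)) ∩ S).card = (S.filter (fun y => y + c ∈ S)).card := by
  rw [← card_image_of_injective (S.filter (fun y => y + c ∈ S)) (add_left_injective c)]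
  congr 1
  ext x
  simp only [mem_inter, mem_image, mem_filter]
  constructor
  · rintro ⟨⟨y, hy, rfl⟩, hx⟩
    exact ⟨y, ⟨hy, hx⟩, rfl⟩
  · rintro ⟨y, ⟨hy, hyc⟩, rfl⟩
    exact ⟨⟨y, hy, rfl⟩, hyc⟩

lemma aux_key_bound (C S : Finset H) :
    S.card * C.card ≤ (∑ c ∈ C, lam S c) + S.card * min C.card S.card := by
  have hlam : ∀ c, lam S c + (S.filter (fun y => y + c ∈ S)).card = S.card := by
    intro c
    rw [← aux_inter_card, lam, card_sdiff_add_card_inter,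
      card_image_of_injective _ (add_left_injective c)]
  have hsum : ∑ c ∈ C, ((S.filter (fun y => y + c ∈ S)).card)
      = ∑ y ∈ S, (C.filter (fun c => y + c ∈ S)).card := by
    simp only [card_filter]
    rw [Finset.sum_comm]
  have hb : ∀ y ∈ S, (C.filter (fun c => y + c ∈ S)).card ≤ min C.card S.card := by
    intro y _
    refine le_min (card_le_card (filter_subset _ _)) ?_
    apply card_le_card_of_injOn (fun c => y + c)
    · intro c hc
      exact (mem_filter.mp hc).2
    · intro a _ b _ h
      exact add_left_cancel h
  calc S.card * C.card = ∑ c ∈ C, S.card := by rw [sum_const, smul_eq_mul, mul_comm]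
    _ = ∑ c ∈ C, (lam S c + (S.filter (fun y => y + c ∈ S)).card) := by
        simp_rw [hlam]
    _ = (∑ c ∈ C, lam S c) + ∑ c ∈ C, (S.filter (fun y => y + c ∈ S)).card :=
        sum_add_distrib
    _ ≤ (∑ c ∈ C, lam S c) + S.card * min C.card S.card := by
        rw [hsum]
        gcongr
        calc ∑ y ∈ S, (C.filter (fun c => y + c ∈ S)).card
            ≤ ∑ y ∈ S, min C.card S.card := sum_le_sum hb
          _ = S.card * min C.card S.card := by rw [sum_const, smul_eq_mul]

lemma aux_main [Fintype H] (C S : Finset H)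
    (hdef : (deficiency S : ℝ) ≤ (C.card : ℝ) / 2) :
    (deficiency S : ℝ) / 2 * C.card ≤ ∑ c ∈ C, (lam S c : ℝ) := by
  obtain ⟨T, hTcard, hTlam⟩ : ∃ T : Finset H, T.card = deficiency S ∧
      ∀ c, lam T c = lam S c := by
    rcases le_total S.card Sᶜ.card with h | h
    · exact ⟨S, (min_eq_left h).symm, fun c => rfl⟩
    · exact ⟨Sᶜ, by simp [deficiency, min_eq_right h], fun c => aux_lam_compl S c⟩
  have hkey := aux_key_bound C T
  have hkeyR : (T.card : ℝ) * C.card ≤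
      (∑ c ∈ C, (lam T c : ℝ)) + T.card * min C.card T.card := by
    exact_mod_cast hkey
  have hmin : ((min C.card T.card : ℕ) : ℝ) ≤ (deficiency S : ℝ) :=
    Nat.cast_le.mpr (hTcard ▸ min_le_right _ _)
  have hTd : (T.card : ℝ) = (deficiency S : ℝ) := by exact_mod_cast hTcard
  have hsum_eq : ∑ c ∈ C, (lam T c : ℝ) = ∑ c ∈ C, (lam S c : ℝ) := by
    exact Finset.sum_congr rfl fun c _ => by rw [hTlam c]
  have hd0 : (0 : ℝ) ≤ (deficiency S : ℝ) := Nat.cast_nonneg _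
  rw [hsum_eq, hTd] at hkeyR
  nlinarith [hkeyR, hmin, hdef, hd0]

end aux

theorem stmt6 {H : Type*} [AddCommGroup H] [Fintype H] [DecidableEq H]
    (C S : Finset H) (hC : C.Nonempty)
    (hdef : (deficiency S : ℝ) ≤ (C.card : ℝ) / 2) :
    (1 / (C.card : ℝ)) * ∑ c ∈ C, (lam S c : ℝ) ≥ (deficiency S : ℝ) / 2 ∧
      ∃ c ∈ C, (lam S c : ℝ) ≥ (deficiency S : ℝ) / 2 := by
  have hCpos : (0 : ℝ) < C.card := by exact_mod_cast card_pos.mpr hC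
  have hmain := aux_main C S hdef
  constructor
  · rw [ge_iff_le, one_div, ← div_eq_inv_mul, le_div_iff₀ hCpos]
    exact hmain
  · by_contra hcon
    push_neg at hcon
    have : ∑ c ∈ C, (lam S c : ℝ) < ∑ c ∈ C, (deficiency S : ℝ) / 2 :=
      Finset.sum_lt_sum_of_nonempty hC hcon
    rw [Finset.sum_const, nsmul_eq_mul] at this
    nlinarith
end

section
/- Let H be a finite abelian group and let C, S ⊆ H with C nonempty, H = ⟨C⟩ (C generates H), and def_H(S) ≥ |C|/2. Then there exists c ∈ C with λ_S(c) ≥ |C|/8. -/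
/-!
`λ_S` is symmetric, subadditive and vanishes at `0`, and `∑_{c ∈ H} λ_S(c) = |S| |H \ S| =
d (|H| - d)` for `d = def_H(S)`. Suppose `λ_S ≤ m < |C|/8` on the symmetric generating set
`A = C ∪ -C ∪ {0}`. The sublevel sets `B_j = {λ_S ≤ j m}` satisfy `B_j + A ⊆ B_{j+1}`, and
Hamidoune's isoperimetric inequality `|B + A| ≥ |B| + |A|/2` (for `B + A ≠ H`; an atom containing
`0` is a subgroup) makes them grow by `|A|/2` per step. For `j = ⌊(d - 1)/2m⌋` the set `B_j` is
then so large that `∑ λ_S ≤ |B_j| j m + (|H| - |B_j|) d` falls short of `d (|H| - d)`.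
-/

open Finset

open scoped Pointwise

lemma eq_univ_of_stabilizer_eq_top {H : Type*} [AddCommGroup H] [Fintype H] [DecidableEq H]
    {s : Finset H} (hs : s.Nonempty) (h : AddAction.stabilizer H s = ⊤) : s = univ := by
  obtain ⟨x, hx⟩ := hs
  refine eq_univ_of_forall fun y => ?_
  have hy := vadd_mem_vadd_finset (a := y - x) hx
  rwa [AddAction.mem_stabilizer_iff.1 (h ▸ AddSubgroup.mem_top (y - x)), vadd_eq_add,
    sub_add_cancel] at hy

section Lam

variable {H : Type*} [AddCommGroup H] [DecidableEq H] (S : Finset H)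

lemma lam_eq_card_vadd_sdiff (c : H) : lam S c = #((c +ᵥ S) \ S) := by
  rw [lam, ← image_vadd]
  simp only [vadd_eq_add, add_comm]

lemma lam_eq_card_filter (c : H) : lam S c = #{s ∈ S | s + c ∉ S} := by
  rw [lam, sdiff_eq_filter, filter_image, card_image_of_injective _ (add_left_injective c)]

@[simp]
lemma lam_zero : lam S 0 = 0 := by
  simp [lam_eq_card_vadd_sdiff]

lemma lam_neg (c : H) : lam S (-c) = lam S c := by
  rw [lam_eq_card_vadd_sdiff, lam_eq_card_vadd_sdiff, ← card_vadd_finset c, vadd_finset_sdiff,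
    vadd_neg_vadd]
  exact card_sdiff_comm (card_vadd_finset c S).symm

lemma lam_add_le (a b : H) : lam S (a + b) ≤ lam S a + lam S b := by
  simp only [lam_eq_card_vadd_sdiff]
  calc #(((a + b) +ᵥ S) \ S)
      ≤ #(((a + b) +ᵥ S) \ (a +ᵥ S)) + #((a +ᵥ S) \ S) :=
        (card_le_card (sdiff_triangle _ _ _)).trans (card_union_le _ _)
    _ = #((b +ᵥ S) \ S) + #((a +ᵥ S) \ S) := by
        rw [add_vadd, ← vadd_finset_sdiff, card_vadd_finset]
    _ = _ := add_comm _ _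

lemma lam_le_card (c : H) : lam S c ≤ #S := by
  rw [lam_eq_card_vadd_sdiff, ← card_vadd_finset c S]
  exact card_le_card sdiff_subset

lemma lam_eq_zero_iff (c : H) : lam S c = 0 ↔ c ∈ AddAction.stabilizer H S := by
  rw [lam_eq_card_vadd_sdiff, card_eq_zero, sdiff_eq_empty_iff_subset,
    AddAction.mem_stabilizer_iff]
  exact ⟨fun h => eq_of_subset_of_card_le h (card_vadd_finset c S).ge, fun h => h.subset⟩

variable [Fintype H]

lemma lam_le_deficiency (c : H) : lam S c ≤ deficiency S := by
  refine le_min (lam_le_card S c) (card_le_card fun x hx => ?_)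
  simpa using (mem_sdiff.1 hx).2

lemma sum_lam : ∑ c, lam S c = #Sᶜ * #S := by
  have hfiber : ∀ s : H, #{c | s + c ∉ S} = #Sᶜ := fun s => by
    rw [← card_vadd_finset (-s) Sᶜ]
    congr 1
    ext c
    simp [mem_neg_vadd_finset_iff]
  simp_rw [lam_eq_card_filter, card_filter]
  rw [sum_comm]
  simp_rw [← card_filter, hfiber, sum_const, smul_eq_mul, mul_comm]

lemma sum_lam_add_deficiency_mul_self :
    ∑ c, lam S c + deficiency S * deficiency S = Fintype.card H * deficiency S := by
  rw [sum_lam, deficiency, ← card_add_card_compl S]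
  rcases min_cases #S #Sᶜ with ⟨h, -⟩ | ⟨h, -⟩ <;> rw [h] <;> ring

lemma card_filter_lam_le_mul_le (t : ℕ) :
    #{c | lam S c ≤ t} * deficiency S ≤ #{c | lam S c ≤ t} * t + deficiency S * deficiency S := by
  have hlow : ∑ c ∈ {c | lam S c ≤ t}, lam S c ≤ #{c | lam S c ≤ t} * t := by
    simpa using sum_le_card_nsmul _ _ t fun c hc => (mem_filter.1 hc).2
  have hhigh : ∑ c ∈ {c | ¬ lam S c ≤ t}, lam S c ≤ #{c | ¬ lam S c ≤ t} * deficiency S := by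
    simpa using sum_le_card_nsmul _ _ _ fun c _ => lam_le_deficiency S c
  have hsplit := sum_filter_add_sum_filter_not univ (fun c => lam S c ≤ t) (lam S)
  have hcard := card_filter_add_card_filter_not (s := univ) (fun c => lam S c ≤ t)
  have htotal := sum_lam_add_deficiency_mul_self S
  rw [card_univ] at hcard
  rw [← hcard] at htotal
  nlinarith

lemma card_filter_lam_le_mul_succ_le {t : ℕ} (ht : 2 * t + 1 ≤ deficiency S) :
    #{c | lam S c ≤ t} * (deficiency S + 1) ≤ 2 * (deficiency S * deficiency S) := by
  have := card_filter_lam_le_mul_le S t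
  have := Nat.mul_le_mul_left #{c | lam S c ≤ t} ht
  nlinarith

lemma filter_lam_le_ne_univ {t : ℕ} (ht : 2 * t + 1 ≤ deficiency S) :
    ({c | lam S c ≤ t} : Finset H) ≠ univ := by
  intro h
  have hle := card_filter_lam_le_mul_succ_le S ht
  rw [h, card_univ, ← card_add_card_compl S] at hle
  have : deficiency S ≤ #S := min_le_left _ _
  have : deficiency S ≤ #Sᶜ := min_le_right _ _
  nlinarith

end Lam

section Atom

variable {H : Type*} [AddCommGroup H] [DecidableEq H] {A B K L X Y : Finset H}

def boundary (A X : Finset H) : ℕ := #(X + A) - #X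

lemma card_add_boundary (h0 : (0 : H) ∈ A) (X : Finset H) : #X + boundary A X = #(X + A) :=
  Nat.add_sub_cancel' (card_le_card (subset_add_left X h0))

lemma boundary_vadd (x : H) (X : Finset H) : boundary A (x +ᵥ X) = boundary A X := by
  simp only [boundary, vadd_add_assoc, card_vadd_finset]

lemma card_inter_add_add_card_union_add_le (X Y : Finset H) :
    #(X ∩ Y + A) + #(X ∪ Y + A) ≤ #(X + A) + #(Y + A) := by
  rw [union_add, ← card_inter_add_card_union (X + A)]
  gcongr
  exact inter_add_subset

lemma card_le_two_mul_boundary_of_coe_eq_addSubgroup (G : AddSubgroup H) (hKG : (K : Set H) = G)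
    (h0 : (0 : H) ∈ A) (hAK : ¬A ⊆ K) : #A ≤ 2 * boundary A K := by
  have hmem : ∀ x, x ∈ K ↔ x ∈ G := fun x => Set.ext_iff.1 hKG x
  obtain ⟨a, ha, haK⟩ := not_subset.1 hAK
  have hdisj : Disjoint K (a +ᵥ K) := by
    refine disjoint_left.2 fun z hz hza => ?_
    obtain ⟨k, hk, rfl⟩ := mem_vadd_finset.1 hza
    refine haK ((hmem a).2 ?_)
    simpa using sub_mem ((hmem _).1 hz) ((hmem k).1 hk)
  have htwo : K ∪ (a +ᵥ K) ⊆ K + A := by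
    refine union_subset (subset_add_left K h0) fun z hz => ?_
    obtain ⟨k, hk, rfl⟩ := mem_vadd_finset.1 hz
    rw [vadd_eq_add, add_comm a k]
    exact add_mem_add hk ha
  have hout : A \ K ⊆ (K + A) \ K :=
    sdiff_subset_sdiff (subset_add_right A ((hmem 0).2 G.zero_mem)) subset_rfl
  have := card_le_card htwo
  rw [card_union_of_disjoint hdisj, card_vadd_finset] at this
  have := card_le_card hout
  rw [card_sdiff_of_subset (subset_add_left K h0)] at this
  have := card_le_card (inter_subset_right (s₁ := A) (s₂ := K))
  have := card_inter_add_card_sdiff A K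
  have := card_add_boundary h0 K
  omega

variable [Fintype H]

lemma disjoint_compl_add_add (hneg : ∀ a ∈ A, -a ∈ A) (X : Finset H) :
    Disjoint ((X + A)ᶜ + A) X := by
  refine disjoint_left.2 fun z hz hzX => ?_
  obtain ⟨y, hy, a, ha, rfl⟩ := mem_add.1 hz
  refine (mem_compl.1 hy) ?_
  simpa using add_mem_add hzX (hneg a ha)

def IsFragment (A X : Finset H) : Prop := X.Nonempty ∧ X + A ≠ univ

lemma IsFragment.of_subset (hY : IsFragment A Y) (hXY : X ⊆ Y) (hX : X.Nonempty) :
    IsFragment A X :=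
  ⟨hX, fun h => hY.2 (univ_subset_iff.1 (h ▸ add_subset_add_right hXY))⟩

lemma IsFragment.vadd (hX : IsFragment A X) (x : H) : IsFragment A (x +ᵥ X) :=
  ⟨hX.1.vadd_finset, by rw [vadd_add_assoc, Ne, vadd_finset_eq_univ]; exact hX.2⟩

lemma IsFragment.compl_add (hneg : ∀ a ∈ A, -a ∈ A) (hX : IsFragment A X) :
    IsFragment A (X + A)ᶜ := by
  refine ⟨nonempty_iff_ne_empty.2 (by rw [Ne, compl_eq_empty_iff]; exact hX.2), fun h => ?_⟩
  obtain ⟨x, hx⟩ := hX.1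
  exact disjoint_left.1 (disjoint_compl_add_add hneg X) (h ▸ mem_univ x) hx

def IsHamidouneAtom (A K : Finset H) : Prop :=
  IsFragment A K ∧ ∀ X, IsFragment A X → toLex (boundary A K, #K) ≤ toLex (boundary A X, #X)

lemma exists_isHamidouneAtom (hX : IsFragment A X) : ∃ K, IsHamidouneAtom A K := by
  classical
  obtain ⟨K, hK, hmin⟩ := ({Y | IsFragment A Y} : Finset (Finset H)).exists_min_image
    (fun Y => toLex (boundary A Y, #Y)) ⟨X, by simpa using hX⟩
  exact ⟨K, (mem_filter.1 hK).2, fun Y hY => hmin Y (by simpa using hY)⟩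

namespace IsHamidouneAtom

lemma lex_le (hK : IsHamidouneAtom A K) (hX : IsFragment A X) :
    boundary A K < boundary A X ∨ boundary A K = boundary A X ∧ #K ≤ #X :=
  Prod.Lex.toLex_le_toLex.1 (hK.2 X hX)

lemma vadd (hK : IsHamidouneAtom A K) (x : H) : IsHamidouneAtom A (x +ᵥ K) :=
  ⟨hK.1.vadd x, fun X hX => by rw [boundary_vadd, card_vadd_finset]; exact hK.2 X hX⟩

lemma card_le_card_compl_add (h0 : (0 : H) ∈ A) (hneg : ∀ a ∈ A, -a ∈ A)
    (hK : IsHamidouneAtom A K) : #K ≤ #(K + A)ᶜ := by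
  have hcompl := card_le_card (subset_compl_iff_disjoint_right.2 (disjoint_compl_add_add hneg K))
  have := hK.lex_le (hK.1.compl_add hneg)
  have := card_add_boundary h0 K
  have := card_add_boundary h0 (K + A)ᶜ
  have := card_add_card_compl (K + A)
  have := card_add_card_compl K
  omega

/-- Otherwise either `K ∪ L` is a fragment, and submodularity makes `K ∩ L` a smaller atom, or
`(K + A) ∪ (L + A) = H`, and counting `H` in two ways contradicts `|K| ≤ |H \ (K + A)|`. -/
lemma eq_of_inter_nonempty (h0 : (0 : H) ∈ A) (hneg : ∀ a ∈ A, -a ∈ A)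
    (hK : IsHamidouneAtom A K) (hL : IsHamidouneAtom A L) (hKL : (K ∩ L).Nonempty) : K = L := by
  have hI := hK.1.of_subset inter_subset_left hKL
  have := hK.lex_le hL.1
  have := hL.lex_le hK.1
  have := hK.lex_le hI
  have := card_add_boundary h0 K
  have := card_add_boundary h0 L
  have := card_add_boundary h0 (K ∩ L)
  have := card_add_boundary h0 (K ∪ L)
  have := card_inter_add_add_card_union_add_le (A := A) K L
  have := card_inter_add_card_union K L
  have := hKL.card_pos
  by_cases hU : K ∪ L + A = univ
  · have hcov : #((K + A) ∩ (L + A)) + Fintype.card H = #(K + A) + #(L + A) := by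
      rw [← card_univ, ← hU, union_add, card_inter_add_card_union]
    have := card_le_card (inter_add_subset (s₁ := K) (s₂ := L) (t := A))
    have := hK.card_le_card_compl_add h0 hneg
    have := card_add_card_compl (K + A)
    omega
  · have := hK.lex_le ⟨hKL.mono inter_subset_union, hU⟩
    have hKL' : K ∩ L = K := eq_of_subset_of_card_le inter_subset_left (by omega)
    exact eq_of_subset_of_card_le (hKL' ▸ inter_subset_right) (by omega)

lemma vadd_eq_self (h0 : (0 : H) ∈ A) (hneg : ∀ a ∈ A, -a ∈ A) (hK : IsHamidouneAtom A K)
    (h0K : (0 : H) ∈ K) {x : H} (hx : x ∈ K) : x +ᵥ K = K :=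
  (hK.vadd x).eq_of_inter_nonempty h0 hneg hK
    ⟨x, mem_inter.2 ⟨by simpa using vadd_mem_vadd_finset (a := x) h0K, hx⟩⟩

lemma coe_eq_stabilizer (h0 : (0 : H) ∈ A) (hneg : ∀ a ∈ A, -a ∈ A) (hK : IsHamidouneAtom A K)
    (h0K : (0 : H) ∈ K) : (K : Set H) = AddAction.stabilizer H K := by
  ext x
  refine ⟨fun hx => hK.vadd_eq_self h0 hneg h0K hx, fun hx => ?_⟩
  rw [SetLike.mem_coe, AddAction.mem_stabilizer_iff] at hx
  have hxK := vadd_mem_vadd_finset (a := x) h0K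
  rw [hx, vadd_eq_add, add_zero] at hxK
  exact hxK

lemma card_le_two_mul_boundary (h0 : (0 : H) ∈ A) (hneg : ∀ a ∈ A, -a ∈ A)
    (hgen : AddSubgroup.closure (A : Set H) = ⊤) (hK : IsHamidouneAtom A K) :
    #A ≤ 2 * boundary A K := by
  obtain ⟨k, hk⟩ := hK.1.1
  have hK' := hK.vadd (-k)
  have h0K' : (0 : H) ∈ -k +ᵥ K := by simpa using vadd_mem_vadd_finset (a := -k) hk
  have hstab := hK'.coe_eq_stabilizer h0 hneg h0K'
  rw [← boundary_vadd (-k) K]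
  refine card_le_two_mul_boundary_of_coe_eq_addSubgroup _ hstab h0 fun hAK => hK'.1.2 ?_
  have htop : AddAction.stabilizer H (-k +ᵥ K) = ⊤ := by
    rw [eq_top_iff, ← hgen, AddSubgroup.closure_le, ← hstab]
    exact_mod_cast hAK
  rw [eq_univ_of_stabilizer_eq_top hK'.1.1 htop]
  exact univ_subset_iff.1 (subset_add_left _ h0)

end IsHamidouneAtom

theorem two_mul_card_add_card_le (h0 : (0 : H) ∈ A) (hneg : ∀ a ∈ A, -a ∈ A)
    (hgen : AddSubgroup.closure (A : Set H) = ⊤) (hB : IsFragment A B) :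
    2 * #B + #A ≤ 2 * #(B + A) := by
  obtain ⟨K, hK⟩ := exists_isHamidouneAtom hB
  have := hK.card_le_two_mul_boundary h0 hneg hgen
  have := hK.lex_le hB
  have := card_add_boundary h0 B
  omega

lemma succ_mul_card_le_two_mul_card_of_add_subset (h0 : (0 : H) ∈ A) (hneg : ∀ a ∈ A, -a ∈ A)
    (hgen : AddSubgroup.closure (A : Set H) = ⊤) {B : ℕ → Finset H} (hB1 : A ⊆ B 1)
    (hB : ∀ j, B j + A ⊆ B (j + 1)) {J : ℕ} (hJ : B J ≠ univ) {j : ℕ} (hj : 1 ≤ j)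
    (hjJ : j ≤ J) : (j + 1) * #A ≤ 2 * #(B j) := by
  have hmono : Monotone B := monotone_nat_of_le_succ fun j => (subset_add_left _ h0).trans (hB j)
  induction j, hj using Nat.le_induction with
  | base => have := card_le_card hB1; omega
  | succ j hj ih =>
    have hfrag : IsFragment A (B j) :=
      ⟨⟨0, hB1.trans (hmono hj) h0⟩,
        fun h => hJ (univ_subset_iff.1 (h ▸ (hB j).trans (hmono hjJ)))⟩
    have := two_mul_card_add_card_le h0 hneg hgen hfrag
    have := card_le_card (hB j)
    have := ih (by omega)
    linarith

end Atom

section Main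

variable {H : Type*} [AddCommGroup H] [Fintype H] [DecidableEq H]

lemma deficiency_eq_zero_of_stabilizer_eq_top {S : Finset H}
    (h : AddAction.stabilizer H S = ⊤) : deficiency S = 0 := by
  rcases S.eq_empty_or_nonempty with rfl | hS
  · simp [deficiency]
  · simp [deficiency, eq_univ_of_stabilizer_eq_top hS h]

theorem min_card_two_mul_deficiency_le (S : Finset H) {A : Finset H} (h0 : (0 : H) ∈ A)
    (hneg : ∀ a ∈ A, -a ∈ A) (hgen : AddSubgroup.closure (A : Set H) = ⊤) {m : ℕ}
    (hA : ∀ a ∈ A, lam S a ≤ m) : min #A (2 * deficiency S) ≤ 8 * m := by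
  set d := deficiency S
  rcases Nat.eq_zero_or_pos m with rfl | hm
  · suffices d = 0 by simp [this]
    refine deficiency_eq_zero_of_stabilizer_eq_top (eq_top_iff.2 ?_)
    rw [← hgen, AddSubgroup.closure_le]
    exact fun a ha => (lam_eq_zero_iff S a).1 (Nat.le_zero.1 (hA a ha))
  by_contra! hlt
  obtain ⟨hAm, hdm⟩ : 8 * m < #A ∧ 8 * m < 2 * d := lt_min_iff.1 hlt
  set J := (d - 1) / (2 * m)
  have hJd : J * (2 * m) ≤ d - 1 := Nat.div_mul_le_self _ _
  have hdJ : d - 1 < J * (2 * m) + 2 * m := Nat.lt_div_mul_add (by omega)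
  have hJ : 1 ≤ J := (Nat.le_div_iff_mul_le (by omega)).2 (by omega)
  set B : ℕ → Finset H := fun j => {c | lam S c ≤ j * m}
  have hB1 : A ⊆ B 1 := fun a ha => by simpa [B] using hA a ha
  have hBA : ∀ j, B j + A ⊆ B (j + 1) := by
    intro j z hz
    obtain ⟨x, hx, a, ha, rfl⟩ := mem_add.1 hz
    simp only [B, mem_filter, mem_univ, true_and] at hx ⊢
    linarith [lam_add_le S x a, hA a ha]
  have hJm : 2 * (J * m) + 1 ≤ d := by rw [← mul_assoc, mul_comm 2 J, mul_assoc]; omega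
  have hBJcard : #(B J) * (d + 1) ≤ 2 * (d * d) := card_filter_lam_le_mul_succ_le S hJm
  have hBJ : B J ≠ univ := filter_lam_le_ne_univ S hJm
  have hgrow := succ_mul_card_le_two_mul_card_of_add_subset h0 hneg hgen hB1 hBA hBJ hJ le_rfl
  have hcount : #A * (d + 1) * d ≤ 8 * m * d * d :=
    calc #A * (d + 1) * d = d * #A * (d + 1) := by ring
      _ ≤ (J + 1) * (2 * m) * #A * (d + 1) := by gcongr; rw [add_mul, one_mul]; omega
      _ = 2 * m * ((J + 1) * #A) * (d + 1) := by ring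
      _ ≤ 2 * m * (2 * #(B J)) * (d + 1) := by gcongr
      _ = 4 * m * (#(B J) * (d + 1)) := by ring
      _ ≤ 4 * m * (2 * (d * d)) := by gcongr
      _ = 8 * m * d * d := by ring
  have := Nat.le_of_mul_le_mul_right hcount (by omega : 0 < d)
  nlinarith

end Main

theorem stmt7 {H : Type*} [AddCommGroup H] [Fintype H] [DecidableEq H]
    (C S : Finset H) (hC : C.Nonempty)
    (hgen : AddSubgroup.closure (C : Set H) = ⊤)
    (hdef : (deficiency S : ℝ) ≥ (C.card : ℝ) / 2) :
    ∃ c ∈ C, (lam S c : ℝ) ≥ (C.card : ℝ) / 8 := by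
  by_contra! hsmall
  obtain ⟨c₀, hc₀, hmax⟩ := C.exists_max_image (lam S) hC
  set A : Finset H := insert 0 (C ∪ -C)
  have hCA : C ⊆ A := subset_union_left.trans (subset_insert _ _)
  have hneg : ∀ a ∈ A, -a ∈ A := by
    simp only [A, mem_insert, mem_union, mem_neg', neg_eq_zero, neg_neg]
    tauto
  have hlam : ∀ a ∈ A, lam S a ≤ lam S c₀ := by
    simp only [A, mem_insert, mem_union, mem_neg']
    rintro a (rfl | ha | ha)
    · simp
    · exact hmax a ha
    · simpa [lam_neg] using hmax (-a) ha
  have hgenA : AddSubgroup.closure (A : Set H) = ⊤ :=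
    top_le_iff.1 (hgen ▸ AddSubgroup.closure_mono (by exact_mod_cast hCA))
  have hmin : min #A (2 * deficiency S) ≤ 8 * lam S c₀ :=
    min_card_two_mul_deficiency_le S (mem_insert_self _ _) hneg hgenA hlam
  have hCd : #C ≤ 2 * deficiency S := by
    exact_mod_cast (show (#C : ℝ) ≤ 2 * deficiency S by linarith)
  have hCm : 8 * lam S c₀ < #C := by
    exact_mod_cast (show 8 * (lam S c₀ : ℝ) < #C by linarith [hsmall c₀ hc₀])
  have := card_le_card hCA
  omega
end

section
/- Let H be a finite abelian group and let C ⊆ H be such that every single element c ∈ C generates H (i.e. H = ⟨c⟩ for each c ∈ C) and C ∩ (−C) = ∅. Then for every positive integer r, either r·C* = H or |r·C*| ≥ 2·r·|C|, where C* = C ∪ (−C) ∪ {0}. -/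
/-
Hamidoune's isoperimetric method. For a symmetric set `B ∋ 0`, let `κ` be the least value of
`|S + B| - |S|` over nonempty `S` with `S + B ≠ H`, and call a set of least size attaining it an
atom. Submodularity of `S ↦ |S + B|`, together with the bound `|A| + |A + B| ≤ |H|` that comes
from applying minimality to the complement of `A + B`, forces two atoms that meet to coincide.
So an atom `A ∋ 0` equals each of its translates `g + A` with `g ∈ A`: it is a subgroup. For
`B = C*` this subgroup is proper, hence contains no generator and misses `C ∪ -C`, which gives
`κ ≥ |(A + B) \ A| ≥ 2|C|`. Every step `S ↦ S + C*` that does not fill `H` therefore adds at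
least `2|C|` elements.
-/

open Finset Pointwise

/-- The `r`-fold sumset `{c₁ + ⋯ + c_r : cᵢ ∈ C}` (equal to `{0}` for `r = 0`). -/
def iterSumset {G : Type*} [AddCommGroup G] [DecidableEq G] : ℕ → Finset G → Finset G
  | 0, _ => {0}
  | r + 1, C => iterSumset r C + C

lemma zero_mem_iterSumset {G : Type*} [AddCommGroup G] [DecidableEq G] {B : Finset G}
    (h0 : (0 : G) ∈ B) (r : ℕ) :
    0 ∈ iterSumset r B := by
  induction r with
  | zero => exact mem_singleton_self 0
  | succ r ih => exact subset_add_left _ h0 ih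

namespace Finset

variable {G : Type*} [AddCommGroup G] [DecidableEq G]

lemma card_inter_add_add_card_union_add_le (X Y B : Finset G) :
    #(X ∩ Y + B) + #(X ∪ Y + B) ≤ #(X + B) + #(Y + B) := by
  rw [union_add, ← card_union_add_card_inter (X + B), add_comm]
  exact Nat.add_le_add_left (card_le_card inter_add_subset) _

lemma compl_add_add_subset_compl [Fintype G] {B : Finset G} (hB : -B = B) (X : Finset G) :
    (X + B)ᶜ + B ⊆ Xᶜ := by
  rintro _ h
  obtain ⟨y, hy, b, hb, rfl⟩ := mem_add.1 h
  refine mem_compl.2 fun hX => mem_compl.1 hy (mem_add.2 ⟨y + b, hX, -b, ?_, by abel⟩)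
  exact hB ▸ neg_mem_neg hb

lemma eq_univ_of_mem_of_zmultiples_eq_top [Fintype G] {A : Finset G} (h0 : 0 ∈ A)
    (hA : ∀ g ∈ A, g +ᵥ A = A) {x : G} (hx : x ∈ A)
    (hgen : AddSubgroup.zmultiples x = ⊤) : A = univ := by
  refine eq_univ_of_forall fun y => ?_
  have hy : y ∈ AddAction.stabilizer G A :=
    AddSubgroup.zmultiples_le.2 (AddAction.mem_stabilizer_iff.2 (hA x hx))
      (hgen ▸ AddSubgroup.mem_top y)
  rw [← AddAction.mem_stabilizer_iff.1 hy]
  simpa using vadd_mem_vadd_finset_iff (s := A) y |>.2 h0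

lemma card_add_two_mul_card_le_card_add [Fintype G] {A C : Finset G} (hA0 : 0 ∈ A)
    (hA : ∀ g ∈ A, g +ᵥ A = A) (hAuniv : A ≠ univ)
    (hgen : ∀ c ∈ C, AddSubgroup.zmultiples c = ⊤) (hdisj : ∀ c ∈ C, -c ∉ C) :
    #A + 2 * #C ≤ #(A + (C ∪ -C ∪ {0})) := by
  have hnot : ∀ x, AddSubgroup.zmultiples x = ⊤ → x ∉ A := fun x hx hxA =>
    hAuniv (eq_univ_of_mem_of_zmultiples_eq_top hA0 hA hxA hx)
  have hCA : Disjoint A (C ∪ -C) := by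
    refine disjoint_right.2 fun x hx => ?_
    rcases mem_union.1 hx with hx | hx
    · exact hnot x (hgen x hx)
    · obtain ⟨c, hc, rfl⟩ := mem_neg.1 hx
      exact hnot (-c) (AddSubgroup.zmultiples_neg.trans (hgen c hc))
  have hCC : Disjoint C (-C) := disjoint_left.2 fun c hc hc' => hdisj c hc (mem_neg'.1 hc')
  have hsub : A ∪ (C ∪ -C) ⊆ A + (C ∪ -C ∪ {0}) :=
    union_subset (subset_add_left A (by simp))
      (subset_union_left.trans (subset_add_right _ hA0))
  calc #A + 2 * #C = #(A ∪ (C ∪ -C)) := by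
        rw [card_union_of_disjoint hCA, card_union_of_disjoint hCC, card_neg]; ring
    _ ≤ _ := card_le_card hsub

end Finset

namespace Hamidoune

variable {G : Type*} [AddCommGroup G] [Fintype G] [DecidableEq G] {B S X Y A : Finset G}

def IsAdmissible (B S : Finset G) : Prop := S.Nonempty ∧ S + B ≠ univ

-- `sInf ∅ = 0`, so this is meaningful only when some admissible set exists (e.g. `B ≠ univ`).
noncomputable def connectivity (B : Finset G) : ℕ :=
  sInf {k | ∃ S, IsAdmissible B S ∧ #(S + B) = #S + k}

def IsFragment (B S : Finset G) : Prop := IsAdmissible B S ∧ #(S + B) = #S + connectivity B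

def IsAtom (B A : Finset G) : Prop := IsFragment B A ∧ ∀ S, IsFragment B S → #A ≤ #S

lemma IsAdmissible.card_add_connectivity_le (h0 : (0 : G) ∈ B) (hS : IsAdmissible B S) :
    #S + connectivity B ≤ #(S + B) := by
  have hle := card_le_card (subset_add_left S h0)
  have := Nat.sInf_le (s := {k | ∃ S, IsAdmissible B S ∧ #(S + B) = #S + k})
    ⟨S, hS, (Nat.add_sub_of_le hle).symm⟩
  unfold connectivity
  omega

lemma IsAdmissible.vadd (g : G) (hS : IsAdmissible B S) : IsAdmissible B (g +ᵥ S) :=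
  ⟨hS.1.vadd_finset, by rw [vadd_add_assoc, Ne, vadd_finset_eq_univ]; exact hS.2⟩

lemma IsFragment.vadd (g : G) (hS : IsFragment B S) : IsFragment B (g +ᵥ S) :=
  ⟨hS.1.vadd g, by rw [vadd_add_assoc, card_vadd_finset, card_vadd_finset, hS.2]⟩

lemma IsAtom.vadd (g : G) (hA : IsAtom B A) : IsAtom B (g +ᵥ A) :=
  ⟨hA.1.vadd g, fun S hS => card_vadd_finset g A ▸ hA.2 S hS⟩

lemma exists_isFragment (h0 : (0 : G) ∈ B) (hB : B ≠ univ) : ∃ S, IsFragment B S := by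
  have hzero : IsAdmissible B {0} := ⟨singleton_nonempty 0, by rwa [singleton_add, zero_vadd]⟩
  obtain ⟨S, hS, hSκ⟩ := Nat.sInf_mem (s := {k | ∃ S, IsAdmissible B S ∧ #(S + B) = #S + k})
    ⟨_, {0}, hzero, (Nat.add_sub_of_le (card_le_card (subset_add_left _ h0))).symm⟩
  exact ⟨S, hS, hSκ⟩

lemma exists_isAtom (h0 : (0 : G) ∈ B) (hB : B ≠ univ) : ∃ A, IsAtom B A := by
  classical
  obtain ⟨S, hS⟩ := exists_isFragment h0 hB
  obtain ⟨A, hA, hmin⟩ := exists_min_image (univ.filter (IsFragment B)) card ⟨S, by simpa⟩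
  exact ⟨A, (mem_filter.1 hA).2, fun T hT => hmin T (by simpa)⟩

lemma exists_isAtom_zero_mem (h0 : (0 : G) ∈ B) (hB : B ≠ univ) : ∃ A, IsAtom B A ∧ 0 ∈ A := by
  obtain ⟨A, hA⟩ := exists_isAtom h0 hB
  obtain ⟨a, ha⟩ := hA.1.1.1
  exact ⟨-a +ᵥ A, hA.vadd (-a), mem_vadd_finset.2 ⟨a, ha, neg_add_cancel a⟩⟩

lemma IsAtom.card_add_card_add_le (h0 : (0 : G) ∈ B) (hB : -B = B) (hA : IsAtom B A) :
    #A + #(A + B) ≤ Fintype.card G := by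
  obtain ⟨⟨⟨a, ha⟩, hAB⟩, hκ⟩ := hA.1
  set D := (A + B)ᶜ
  have hDB : #(D + B) ≤ Fintype.card G - #A := card_compl A ▸ card_le_card
    (compl_add_add_subset_compl hB A)
  have hD : IsAdmissible B D := by
    refine ⟨nonempty_iff_ne_empty.2 ((compl_eq_empty_iff _).not.2 hAB), fun h => ?_⟩
    exact mem_compl.1 (compl_add_add_subset_compl hB A (h ▸ mem_univ a)) ha
  have hDcard : #D = Fintype.card G - #(A + B) := card_compl _
  have hAB_le := card_le_univ (A + B)
  have hDκ := hD.card_add_connectivity_le h0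
  have := hA.2 D ⟨hD, by omega⟩
  omega

lemma IsAtom.eq_of_inter_nonempty (h0 : (0 : G) ∈ B) (hB : -B = B) (hX : IsAtom B X)
    (hY : IsAtom B Y) (hXY : (X ∩ Y).Nonempty) : X = Y := by
  have hcard : #X = #Y := le_antisymm (hX.2 Y hY.1) (hY.2 X hX.1)
  have hXκ := hX.1.2
  have hYκ := hY.1.2
  have hI : IsAdmissible B (X ∩ Y) := ⟨hXY, fun h => hX.1.1.2 <| univ_subset_iff.1 <|
    h ▸ add_subset_add_right inter_subset_left⟩
  have hIκ := hI.card_add_connectivity_le h0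
  have hsub := card_inter_add_add_card_union_add_le X Y B
  have hbound := hX.card_add_card_add_le h0 hB
  have hIpos := hXY.card_pos
  -- `|(X ∪ Y) + B| ≤ 2 (|X| + κ) - (1 + κ) < |X| + |X + B| ≤ |G|`
  have hU : IsAdmissible B (X ∪ Y) := ⟨hXY.mono inter_subset_union, fun h => by
    rw [h, card_univ] at hsub
    omega⟩
  have hUκ := hU.card_add_connectivity_le h0
  have hunion := card_union_add_card_inter X Y
  have hIX := hX.2 (X ∩ Y) ⟨hI, by omega⟩
  rw [← eq_of_subset_of_card_le inter_subset_left hIX,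
    eq_of_subset_of_card_le inter_subset_right (hcard ▸ hIX)]

lemma IsAtom.vadd_eq_self (h0 : (0 : G) ∈ B) (hB : -B = B) (hA : IsAtom B A) (h0A : 0 ∈ A)
    {g : G} (hg : g ∈ A) : g +ᵥ A = A :=
  (hA.vadd g).eq_of_inter_nonempty h0 hB hA
    ⟨g, mem_inter.2 ⟨mem_vadd_finset.2 ⟨0, h0A, add_zero g⟩, hg⟩⟩

lemma IsAdmissible.card_add_two_mul_card_le {C : Finset G}
    (hgen : ∀ c ∈ C, AddSubgroup.zmultiples c = ⊤) (hdisj : ∀ c ∈ C, -c ∉ C)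
    (hS : IsAdmissible (C ∪ -C ∪ {0}) S) :
    #S + 2 * #C ≤ #(S + (C ∪ -C ∪ {0})) := by
  set B := C ∪ -C ∪ {0}
  have h0 : (0 : G) ∈ B := by simp [B]
  have hneg : -B = B := by ext x; simp [B, or_comm]
  have hB : B ≠ univ := fun h => by
    obtain ⟨s, hs⟩ := hS.1
    exact hS.2 (eq_univ_of_forall fun x => mem_add.2 ⟨s, hs, x - s, h ▸ mem_univ _, by abel⟩)
  obtain ⟨A, hA, h0A⟩ := exists_isAtom_zero_mem h0 hB
  have hAuniv : A ≠ univ := fun h => hA.1.1.2 (univ_subset_iff.1 (h ▸ subset_add_left A h0))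
  have hcount : #A + 2 * #C ≤ #(A + B) := card_add_two_mul_card_le_card_add h0A
    (fun g hg => hA.vadd_eq_self h0 hneg h0A hg) hAuniv hgen hdisj
  have := hS.card_add_connectivity_le h0
  have := hA.1.2
  omega

end Hamidoune

open Hamidoune

theorem stmt10 {H : Type*} [AddCommGroup H] [Fintype H] [DecidableEq H]
    (C : Finset H)
    (hgen : ∀ c ∈ C, AddSubgroup.zmultiples c = ⊤)
    (hdisj : ∀ c ∈ C, -c ∉ C) :
    ∀ r : ℕ, 0 < r →
      iterSumset r (C ∪ (-C) ∪ {0}) = Finset.univ ∨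
        ((iterSumset r (C ∪ (-C) ∪ {0})).card : ℝ) ≥ 2 * r * C.card := by
  set B := C ∪ -C ∪ {0}
  suffices h : ∀ r, iterSumset r B = univ ∨ 2 * r * #C ≤ #(iterSumset r B) from
    fun r _ => (h r).imp_right fun h => by exact_mod_cast h
  have h0 : (0 : H) ∈ B := by simp [B]
  intro r
  induction r with
  | zero => simp
  | succ r ih =>
    by_cases hfull : iterSumset (r + 1) B = univ
    · exact .inl hfull
    have hstep := IsAdmissible.card_add_two_mul_card_le hgen hdisj
      ⟨⟨0, zero_mem_iterSumset h0 r⟩, hfull⟩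
    have hr : iterSumset r B ≠ univ := fun h =>
      hfull (univ_subset_iff.1 (h ▸ subset_add_left _ h0))
    have hprev := ih.resolve_left hr
    refine .inr ?_
    change _ ≤ #(iterSumset r B + B)
    linarith
end

section
/- Let G be a finite abelian group, H a subgroup of G, B ⊆ G, and set S = Σ(B). Then for every b ∈ B and every coset Q of H in G, |S ∩ (Q + b)| + |S ∩ (Q − b)| ≥ |S ∩ Q|; in particular, at least one of |S ∩ (Q+b)|, |S ∩ (Q−b)| is at least |S ∩ Q|/2. -/
open Finset

/-- The set of all subset sums of a finite set `B` in an abelian group. -/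
def subsetSums {G : Type*} [AddCommGroup G] [DecidableEq G] (A : Finset G) : Finset G :=
  A.powerset.image fun B => B.sum id

/-- The intersection of a finite set `S` with the coset `g + H`, as a finite set. -/
def cosetInter {G : Type*} [AddCommGroup G] [DecidableEq G] (H : AddSubgroup G)
    [DecidablePred (· ∈ H)] (S : Finset G) (g : G) : Finset G :=
  S.filter fun x => x - g ∈ H

theorem stmt18 {G : Type*} [AddCommGroup G] [Fintype G] [DecidableEq G]
    (H : AddSubgroup G) [DecidablePred (· ∈ H)] (B : Finset G) (b : G) (hb : b ∈ B) (g : G) :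
    (cosetInter H (subsetSums B) (g + b)).card + (cosetInter H (subsetSums B) (g - b)).card ≥
        (cosetInter H (subsetSums B) g).card ∧
    (2 * (cosetInter H (subsetSums B) (g + b)).card ≥ (cosetInter H (subsetSums B) g).card ∨
      2 * (cosetInter H (subsetSums B) (g - b)).card ≥ (cosetInter H (subsetSums B) g).card) := by
  have key : cosetInter H (subsetSums B) g ⊆
      ((cosetInter H (subsetSums B) (g + b)).image (· - b)) ∪
        ((cosetInter H (subsetSums B) (g - b)).image (· + b)) := by
    intro x hx
    simp only [cosetInter, mem_filter] at hx
    obtain ⟨hxS, hxH⟩ := hx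
    rw [subsetSums, mem_image] at hxS
    obtain ⟨B', hB', hsum⟩ := hxS
    rw [mem_powerset] at hB'
    by_cases hbB : b ∈ B'
    · apply mem_union_right
      refine mem_image.2 ⟨x - b, ?_, by abel⟩
      simp only [cosetInter, mem_filter]
      refine ⟨?_, by rwa [show x - b - (g - b) = x - g by abel]⟩
      rw [subsetSums, mem_image]
      refine ⟨B'.erase b, mem_powerset.2 ((erase_subset _ _).trans hB'), ?_⟩
      refine eq_sub_of_add_eq ?_
      exact (Finset.sum_erase_add B' id hbB).trans hsum
    · apply mem_union_left
      refine mem_image.2 ⟨x + b, ?_, by abel⟩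
      simp only [cosetInter, mem_filter]
      refine ⟨?_, by rwa [show x + b - (g + b) = x - g by abel]⟩
      rw [subsetSums, mem_image]
      refine ⟨insert b B', mem_powerset.2 (insert_subset hb hB'), ?_⟩
      rw [Finset.sum_insert hbB, hsum]
      show b + x = x + b
      abel
  have h1 : (cosetInter H (subsetSums B) g).card ≤
      (cosetInter H (subsetSums B) (g + b)).card + (cosetInter H (subsetSums B) (g - b)).card := by
    calc (cosetInter H (subsetSums B) g).card ≤ _ := card_le_card key
      _ ≤ ((cosetInter H (subsetSums B) (g + b)).image (· - b)).card +
          ((cosetInter H (subsetSums B) (g - b)).image (· + b)).card := card_union_le _ _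
      _ = _ := by
          rw [card_image_of_injective _ (sub_left_injective),
            card_image_of_injective _ (add_left_injective b)]
  exact ⟨h1, by omega⟩
end

section
/- Let p be a prime and let A = {−(p−1), ..., −2, −1, 1, 2, ..., p−1} ⊆ Z_{p²} (the residues of the nonzero integers a with |a| ≤ p−1). Then every element of A is coprime to p², |A| = 2p − 2, and the element p(p−1)/2 + 1 is not in Σ(A); in particular Σ(A) ≠ Z_{p²}. -/
open Finset

lemma gauss_int (n : ℕ) : (∑ i ∈ Finset.Icc (1:ℤ) (n:ℤ), i) * 2 = n * (n + 1) := by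
  induction n with
  | zero => simp
  | succ k ih =>
    have hins : Finset.Icc (1:ℤ) ((k+1:ℕ):ℤ) = insert ((k:ℤ)+1) (Finset.Icc (1:ℤ) (k:ℤ)) := by
      ext x
      simp only [Finset.mem_Icc, Finset.mem_insert]
      push_cast
      omega
    have hnot : ((k:ℤ)+1) ∉ Finset.Icc (1:ℤ) (k:ℤ) := by
      simp only [Finset.mem_Icc]; omega
    rw [hins, Finset.sum_insert hnot]
    push_cast
    push_cast at ih
    linarith

theorem stmt19 (p : ℕ) (hp : p.Prime) :
    let A : Finset (ZMod (p ^ 2)) :=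
      ((Finset.Icc (-((p : ℤ) - 1)) ((p : ℤ) - 1)).erase 0).image fun a : ℤ => (a : ZMod (p ^ 2))
    (∀ a ∈ A, Nat.Coprime (ZMod.val a) (p ^ 2)) ∧
    A.card = 2 * p - 2 ∧
    ((p * (p - 1) / 2 + 1 : ℕ) : ZMod (p ^ 2)) ∉ subsetSums A ∧
    ¬(∀ x : ZMod (p ^ 2), x ∈ subsetSums A) := by
  intro A
  have hp2 : 2 ≤ p := hp.two_le
  have hpz : (2:ℤ) ≤ (p:ℤ) := by exact_mod_cast hp2
  have hppos : 0 < p ^ 2 := pow_pos hp.pos 2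
  haveI : NeZero (p ^ 2) := ⟨hppos.ne'⟩
  set D : Finset ℤ := (Finset.Icc (-((p : ℤ) - 1)) ((p : ℤ) - 1)).erase 0 with hD
  have hDmem : ∀ c ∈ D, c ≠ 0 ∧ -((p:ℤ) - 1) ≤ c ∧ c ≤ (p:ℤ) - 1 := by
    intro c hc
    rw [hD, Finset.mem_erase, Finset.mem_Icc] at hc
    exact ⟨hc.1, hc.2.1, hc.2.2⟩
  have hDmem' : ∀ c : ℤ, c ≠ 0 → -((p:ℤ) - 1) ≤ c → c ≤ (p:ℤ) - 1 → c ∈ D := by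
    intro c h1 h2 h3
    rw [hD, Finset.mem_erase, Finset.mem_Icc]
    exact ⟨h1, h2, h3⟩
  have hsq : ((p:ℤ)) * (p:ℤ) = ((p^2 : ℕ) : ℤ) := by push_cast; ring
  -- injectivity of the cast on D
  have hinj : ∀ c ∈ D, ∀ d ∈ D, (c : ZMod (p ^ 2)) = (d : ZMod (p ^ 2)) → c = d := by
    intro c hc d hd h
    have h0 : ((c - d : ℤ) : ZMod (p ^ 2)) = 0 := by push_cast [h]; ring
    have hdvd : ((p^2 : ℕ) : ℤ) ∣ (c - d) := (ZMod.intCast_zmod_eq_zero_iff_dvd _ _).1 h0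
    have hc' := hDmem c hc
    have hd' := hDmem d hd
    have hpp : (2:ℤ) * (p:ℤ) ≤ (p:ℤ) * (p:ℤ) := by nlinarith
    have hlt : |c - d| < ((p^2 : ℕ) : ℤ) := by
      rw [← hsq, abs_lt]
      constructor <;> linarith [hc'.2.1, hc'.2.2, hd'.2.1, hd'.2.2]
    have := Int.eq_zero_of_abs_lt_dvd hdvd hlt
    omega
  -- every element of A comes from D
  have hmemA : ∀ a ∈ A, ∃ c ∈ D, (c : ZMod (p ^ 2)) = a := by
    intro a ha
    rcases Finset.mem_image.1 ha with ⟨c, hc, rfl⟩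
    exact ⟨c, hc, rfl⟩
  -- coprimality
  have part1 : ∀ a ∈ A, Nat.Coprime (ZMod.val a) (p ^ 2) := by
    intro a ha
    rcases hmemA a ha with ⟨c, hc, rfl⟩
    rcases hDmem c hc with ⟨hc0, hcb1, hcb2⟩
    have hnd : ¬ p ∣ ZMod.val ((c : ZMod (p ^ 2))) := by
      intro hdvd
      have hval : ((ZMod.val ((c : ZMod (p ^ 2)))) : ℤ) = c % ((p^2 : ℕ) : ℤ) :=
        ZMod.val_intCast c
      have h1 : (p:ℤ) ∣ (ZMod.val ((c : ZMod (p ^ 2))) : ℤ) := by exact_mod_cast hdvd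
      rw [hval] at h1
      have h2 : (p:ℤ) ∣ ((p^2 : ℕ) : ℤ) := ⟨p, hsq.symm⟩
      have hsplit : c % ((p^2 : ℕ) : ℤ) + ((p^2 : ℕ) : ℤ) * (c / ((p^2 : ℕ) : ℤ)) = c :=
        Int.emod_add_mul_ediv c _
      have h3 : (p:ℤ) ∣ c := by
        rw [← hsplit]; exact dvd_add h1 (h2.mul_right _)
      have h4 : (p:ℤ) ≤ |c| := Int.le_of_dvd (abs_pos.2 hc0) ((dvd_abs _ _).2 h3)
      rcases abs_cases c with ⟨he, _⟩ | ⟨he, _⟩ <;> rw [he] at h4 <;> omega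
    exact (Nat.coprime_pow_right_iff (by norm_num) _ _).2
      (Nat.coprime_comm.1 (hp.coprime_iff_not_dvd.2 hnd))
  -- cardinality
  have hcardD : D.card = 2 * p - 2 := by
    have h0 : (0:ℤ) ∈ Finset.Icc (-((p : ℤ) - 1)) ((p : ℤ) - 1) := by
      rw [Finset.mem_Icc]; omega
    rw [hD, Finset.card_erase_of_mem h0, Int.card_Icc]
    omega
  have part2 : A.card = 2 * p - 2 := by
    rw [show A = D.image (fun a : ℤ => (a : ZMod (p ^ 2))) from rfl,
      Finset.card_image_of_injOn (fun c hc d hd h => hinj c hc d hd h), hcardD]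
  -- the Gauss sum
  have hpcast : (((p - 1 : ℕ)):ℤ) = (p:ℤ) - 1 := by
    have := hp.pos; omega
  have hS2 : (∑ i ∈ Finset.Icc (1:ℤ) ((p:ℤ) - 1), i) * 2 = (p:ℤ) * (p:ℤ) - (p:ℤ) := by
    have h := gauss_int (p - 1)
    rw [hpcast] at h
    rw [h]; ring
  -- sum bound
  have hub : ∀ C : Finset ℤ, C ⊆ D →
      (∑ c ∈ C, c) ≤ ∑ i ∈ Finset.Icc (1:ℤ) ((p:ℤ) - 1), i := by
    intro C hC
    classical
    have hsplit := Finset.sum_filter_add_sum_filter_not C (fun c => 0 < c) (fun c => c)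
    have hneg : (∑ c ∈ C.filter (fun c => ¬ 0 < c), c) ≤ 0 :=
      Finset.sum_nonpos (by
        intro i hi
        rw [Finset.mem_filter] at hi
        omega)
    have hpos : (∑ c ∈ C.filter (fun c => 0 < c), c) ≤
        ∑ i ∈ Finset.Icc (1:ℤ) ((p:ℤ) - 1), i := by
      apply Finset.sum_le_sum_of_subset_of_nonneg
      · intro c hc
        rw [Finset.mem_filter] at hc
        have := hDmem c (hC hc.1)
        rw [Finset.mem_Icc]
        omega
      · intro i hi _
        rw [Finset.mem_Icc] at hi
        omega
    linarith
  have hlb : ∀ C : Finset ℤ, C ⊆ D →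
      -(∑ i ∈ Finset.Icc (1:ℤ) ((p:ℤ) - 1), i) ≤ ∑ c ∈ C, c := by
    intro C hC
    have hCneg : C.image (fun c => -c) ⊆ D := by
      intro x hx
      rcases Finset.mem_image.1 hx with ⟨c, hc, rfl⟩
      rcases hDmem c (hC hc) with ⟨h1, h2, h3⟩
      exact hDmem' _ (neg_ne_zero.2 h1) (by omega) (by omega)
    have h := hub _ hCneg
    rw [Finset.sum_image (fun a _ b _ h => neg_injective h)] at h
    rw [Finset.sum_neg_distrib] at h
    linarith
  -- the missing element
  have heven : 2 * (p * (p - 1) / 2) = p * (p - 1) := by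
    apply Nat.mul_div_cancel'
    have h1 : p - 1 + 1 = p := by omega
    have : Even ((p - 1) * (p - 1 + 1)) := Nat.even_mul_succ_self _
    rw [h1, mul_comm] at this
    exact this.two_dvd
  have ht : ((p * (p - 1) / 2 + 1 : ℕ) : ℤ) * 2 = (p:ℤ) * (p:ℤ) - (p:ℤ) + 2 := by
    have h2 : ((2 * (p * (p - 1) / 2) : ℕ) : ℤ) = ((p * (p - 1) : ℕ) : ℤ) := by rw [heven]
    push_cast at h2 ⊢
    rw [hpcast] at h2 ⊢
    have h3 : (p:ℤ) * ((p:ℤ) - 1) = (p:ℤ) * (p:ℤ) - (p:ℤ) := by ring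
    rw [h3] at h2 ⊢
    linarith
  have part3 : ((p * (p - 1) / 2 + 1 : ℕ) : ZMod (p ^ 2)) ∉ subsetSums A := by
    intro hmem
    rcases Finset.mem_image.1 hmem with ⟨B, hB, hBsum⟩
    rw [Finset.mem_powerset] at hB
    set C : Finset ℤ := D.filter (fun c => (c : ZMod (p ^ 2)) ∈ B) with hC
    have hCD : C ⊆ D := Finset.filter_subset _ _
    have hBC : B = C.image (fun c : ℤ => (c : ZMod (p ^ 2))) := by
      ext x
      constructor
      · intro hx
        rcases hmemA x (hB hx) with ⟨c, hc, rfl⟩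
        exact Finset.mem_image.2 ⟨c, Finset.mem_filter.2 ⟨hc, hx⟩, rfl⟩
      · intro hx
        rcases Finset.mem_image.1 hx with ⟨c, hc, rfl⟩
        exact (Finset.mem_filter.1 hc).2
    have hsum : B.sum id = ((∑ c ∈ C, c : ℤ) : ZMod (p ^ 2)) := by
      rw [hBC, Finset.sum_image (fun a ha b hb h => hinj a (hCD ha) b (hCD hb) h)]
      push_cast
      rfl
    have hbu := hub C hCD
    have hbl := hlb C hCD
    have hpp : (0:ℤ) ≤ (p:ℤ) * (p:ℤ) := mul_nonneg (by linarith) (by linarith)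
    have hkey : (((p * (p - 1) / 2 + 1 : ℕ) : ℤ) - (∑ c ∈ C, c) : ℤ) = 0 := by
      have h0 : ((((p * (p - 1) / 2 + 1 : ℕ) : ℤ) - (∑ c ∈ C, c) : ℤ) : ZMod (p ^ 2)) = 0 := by
        rw [Int.cast_sub, Int.cast_natCast, ← hBsum, hsum]
        exact sub_self _
      have hdvd := (ZMod.intCast_zmod_eq_zero_iff_dvd _ _).1 h0
      apply Int.eq_zero_of_abs_lt_dvd hdvd
      rw [← hsq, abs_lt]
      constructor <;> linarith
    linarith
  exact ⟨part1, part2, part3, fun h => part3 (h _)⟩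
end
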